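/- arXiv:2201.06407 — 4 statements merged into one kernel-verified Lean document; each statement's English description precedes it below -/
import Mathlib

section
/- Soundness of the robust chance-constraint reformulation (no distributional assumption): Let μ be a standardized probability measure on ℝ (mean 0, second moment 1), let m ∈ ℝ, s ≥ 0, γ ∈ (0, 1), and let ν be the pushforward of μ under the map x ↦ m + s·x. If y ≤ m − s·√((1−γ)/γ), then ν({z : z ≥ y}) ≥ 1 − γ, i.e., the chance constraint P(Z ≥ y) ≥ 1 − γ holds for the random variable Z = m + s·ξ. -/
/-!
Cantelli's one-sided inequality `P(ξ ≤ -a) ≤ 1 / (1 + a²)` for a standardized `ξ` is exactly what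
makes `√((1 - γ) / γ)` a safe replacement for the unknown quantile: with `a = √((1 - γ) / γ)` the
bound equals `γ`, and since `s ≥ 0`, every `x > -a` gives `m + s x ≥ m - s a ≥ y`.
-/

open MeasureTheory

theorem cantelli_measureReal_le_neg {Ω : Type*} [MeasurableSpace Ω] {μ : Measure Ω}
    [IsProbabilityMeasure μ] {X : Ω → ℝ} (hX : MemLp X 2 μ) (hmean : ∫ ω, X ω ∂μ = 0)
    {a : ℝ} (ha : 0 < a) :
    μ.real {ω | X ω ≤ -a} ≤ (∫ ω, X ω ^ 2 ∂μ) / (∫ ω, X ω ^ 2 ∂μ + a ^ 2) := by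
  set σ2 := ∫ ω, X ω ^ 2 ∂μ
  -- Markov's inequality for `(u - X)²`, with the shift `u = σ² / a` that optimizes the bound.
  set u := σ2 / a
  have hsub : {ω | X ω ≤ -a} ⊆ {ω | (u + a) ^ 2 ≤ (u - X ω) ^ 2} := fun ω (hω : X ω ≤ -a) =>
    pow_le_pow_left₀ (by positivity : (0 : ℝ) ≤ u + a) (by linarith : u + a ≤ u - X ω) 2
  have hX1 : Integrable X μ := hX.integrable one_le_two
  have hlin : Integrable (fun ω => u ^ 2 - 2 * u * X ω) μ :=
    (integrable_const _).sub (hX1.const_mul _)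
  have hmoment : ∫ ω, (u - X ω) ^ 2 ∂μ = u ^ 2 + σ2 := calc
    ∫ ω, (u - X ω) ^ 2 ∂μ = ∫ ω, (u ^ 2 - 2 * u * X ω) + X ω ^ 2 ∂μ := by
      congr 1; funext ω; ring
    _ = u ^ 2 + σ2 := by
      rw [integral_add hlin hX.integrable_sq, integral_sub (integrable_const _) (hX1.const_mul _),
        integral_const_mul, hmean]
      simp [σ2]
  have hmarkov := mul_meas_ge_le_integral_of_nonneg (ae_of_all _ fun ω => sq_nonneg (u - X ω))
    ((memLp_const u).sub hX).integrable_sq ((u + a) ^ 2)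
  rw [hmoment] at hmarkov
  have hu_mul : u * a = σ2 := div_mul_cancel₀ _ ha.ne'
  have hua : (u + a) * a = σ2 + a ^ 2 := by rw [← hu_mul]; ring
  have hpos : 0 < σ2 + a ^ 2 := by positivity
  have hscaled : (σ2 + a ^ 2) * ((σ2 + a ^ 2) * μ.real {ω | X ω ≤ -a}) ≤ (σ2 + a ^ 2) * σ2 := calc
    (σ2 + a ^ 2) * ((σ2 + a ^ 2) * μ.real {ω | X ω ≤ -a})
        ≤ ((u + a) * a) ^ 2 * μ.real {ω | (u + a) ^ 2 ≤ (u - X ω) ^ 2} := by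
      rw [hua, ← mul_assoc, ← sq]; gcongr; exact measure_ne_top μ _
    _ ≤ a ^ 2 * (u ^ 2 + σ2) := by rw [mul_pow, mul_comm _ (a ^ 2), mul_assoc]; gcongr
    _ = (σ2 + a ^ 2) * σ2 := by rw [← hu_mul]; ring
  rw [le_div_iff₀ hpos, mul_comm]
  exact le_of_mul_le_mul_left hscaled hpos

lemma one_div_one_add_sqrt_sq {γ : ℝ} (hγ0 : 0 < γ) (hγ1 : γ ≤ 1) :
    1 / (1 + √((1 - γ) / γ) ^ 2) = γ := by
  rw [Real.sq_sqrt (div_nonneg (sub_nonneg.2 hγ1) hγ0.le)]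
  field_simp
  ring

/-- Soundness of the robust chance-constraint reformulation (no distributional
assumption): if `ξ ∼ μ` is standardized and `Z = m + s·ξ`, then
`y ≤ m - s·√((1-γ)/γ)` implies `P(Z ≥ y) ≥ 1 - γ`. -/
theorem robust_reformulation_sound (μ : Measure ℝ) [IsProbabilityMeasure μ]
    (hL2 : MemLp id 2 μ)
    (hmean : ∫ x, x ∂μ = 0) (hsq : ∫ x, x ^ 2 ∂μ = 1)
    (m s γ : ℝ) (hs : 0 ≤ s) (hγ : γ ∈ Set.Ioo (0 : ℝ) 1)
    (ν : Measure ℝ) (hν : ν = μ.map (fun x => m + s * x))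
    (y : ℝ) (hy : y ≤ m - s * Real.sqrt ((1 - γ) / γ)) :
    ENNReal.ofReal (1 - γ) ≤ ν {z : ℝ | y ≤ z} := by
  obtain ⟨hγ0, hγ1⟩ := hγ
  set a := √((1 - γ) / γ)
  have ha : 0 < a := Real.sqrt_pos.2 (div_pos (sub_pos.2 hγ1) hγ0)
  have htail : μ.real (Set.Iic (-a)) ≤ γ := by
    have h := cantelli_measureReal_le_neg (X := id) hL2 hmean ha
    simp only [id] at h
    rwa [hsq, one_div_one_add_sqrt_sq hγ0 hγ1.le] at h
  have hsub : Set.Ioi (-a) ⊆ (fun x => m + s * x) ⁻¹' Set.Ici y := fun x (hx : -a < x) =>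
    show y ≤ m + s * x by nlinarith
  calc ENNReal.ofReal (1 - γ)
      ≤ ENNReal.ofReal (μ.real (Set.Ioi (-a))) := by
        rw [← Set.compl_Iic, measureReal_compl measurableSet_Iic, probReal_univ]
        exact ENNReal.ofReal_le_ofReal (by linarith)
    _ = μ (Set.Ioi (-a)) := ofReal_measureReal
    _ ≤ μ ((fun x => m + s * x) ⁻¹' Set.Ici y) := measure_mono hsub
    _ = ν (Set.Ici y) := by rw [hν, Measure.map_apply (by fun_prop) measurableSet_Ici]
end

section
/- Soundness of the robust chance-constraint reformulation (symmetric case): Let μ be a standardized probability measure on ℝ (mean 0, second moment 1) that is symmetric about 0, let m ∈ ℝ, s ≥ 0, γ ∈ (0, 1/2], and let ν be the pushforward of μ under the map x ↦ m + s·x. If y ≤ m − s·√(1/(2γ)), then ν({z : z ≥ y}) ≥ 1 − γ. -/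
/-!
Markov's inequality for `x²` bounds the two-sided tail `P(|ξ| ≥ t)` by `1/t²`; symmetry splits it
into two equal one-sided tails, so `P(ξ ≤ -t) ≤ 1/(2t²)`, which equals `γ` for `t = √(1/(2γ))`.
Since `s ≥ 0`, the event `ξ ≥ -t` is contained in `m + s ξ ≥ y`.
-/

open MeasureTheory Set

lemma measure_le_abs_le_integral_sq_div_sq {μ : Measure ℝ} [IsFiniteMeasure μ]
    (hint : Integrable (fun x => x ^ 2) μ) {t : ℝ} (ht : 0 < t) :
    μ {x | t ≤ |x|} ≤ ENNReal.ofReal ((∫ x, x ^ 2 ∂μ) / t ^ 2) := by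
  have hset : {x : ℝ | t ≤ |x|} = {x | t ^ 2 ≤ x ^ 2} := by
    ext x
    simp only [mem_ofPred_eq, ← sq_abs x]
    exact (pow_le_pow_iff_left₀ ht.le (abs_nonneg x) two_ne_zero).symm
  have hmarkov := mul_meas_ge_le_integral_of_nonneg
    (Filter.Eventually.of_forall fun x => sq_nonneg x) hint (t ^ 2)
  rw [hset, ← ofReal_measureReal]
  exact ENNReal.ofReal_le_ofReal <| (le_div_iff₀' (by positivity)).mpr hmarkov

lemma measure_Iic_neg_eq_measure_Ici_of_map_neg_eq {μ : Measure ℝ}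
    (hsymm : μ.map (fun x : ℝ => -x) = μ) (t : ℝ) : μ (Iic (-t)) = μ (Ici t) := by
  conv_lhs => rw [← hsymm]
  rw [Measure.map_apply measurable_neg measurableSet_Iic]
  congr 1
  ext x
  simp

lemma measure_Iic_neg_le_integral_sq_div_of_map_neg_eq {μ : Measure ℝ} [IsFiniteMeasure μ]
    (hsymm : μ.map (fun x : ℝ => -x) = μ) (hint : Integrable (fun x => x ^ 2) μ)
    {t : ℝ} (ht : 0 < t) :
    μ (Iic (-t)) ≤ ENNReal.ofReal ((∫ x, x ^ 2 ∂μ) / (2 * t ^ 2)) := by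
  have hdisj : Disjoint (Iic (-t)) (Ici t) :=
    Iic_disjoint_Ici.mpr (by linarith)
  have htails : Iic (-t) ∪ Ici t ⊆ {x | t ≤ |x|} := by
    rintro x (hx | hx)
    · exact show t ≤ |x| from le_abs.mpr (Or.inr (le_neg_of_le_neg (mem_Iic.mp hx)))
    · exact show t ≤ |x| from le_abs.mpr (Or.inl (mem_Ici.mp hx))
  rw [← ENNReal.mul_le_mul_iff_right two_ne_zero ENNReal.ofNat_ne_top]
  calc 2 * μ (Iic (-t)) = μ (Iic (-t)) + μ (Ici t) := by
        rw [two_mul, measure_Iic_neg_eq_measure_Ici_of_map_neg_eq hsymm]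
    _ = μ (Iic (-t) ∪ Ici t) := (measure_union hdisj measurableSet_Ici).symm
    _ ≤ μ {x | t ≤ |x|} := measure_mono htails
    _ ≤ ENNReal.ofReal ((∫ x, x ^ 2 ∂μ) / t ^ 2) := measure_le_abs_le_integral_sq_div_sq hint ht
    _ = 2 * ENNReal.ofReal ((∫ x, x ^ 2 ∂μ) / (2 * t ^ 2)) := by
        rw [← ENNReal.ofReal_ofNat 2, ← ENNReal.ofReal_mul zero_le_two]
        congr 1
        field_simp

lemma ofReal_one_sub_le_measure_compl {α : Type*} [MeasurableSpace α] {μ : Measure α}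
    [IsProbabilityMeasure μ] {s : Set α} (hs : MeasurableSet s) {γ : ℝ} (hγ : 0 ≤ γ)
    (h : μ s ≤ ENNReal.ofReal γ) : ENNReal.ofReal (1 - γ) ≤ μ sᶜ := by
  rw [prob_compl_eq_one_sub hs, ENNReal.ofReal_sub 1 hγ, ENNReal.ofReal_one]
  exact tsub_le_tsub_left h 1

lemma measure_Ici_neg_le_map_affine_Ici (μ : Measure ℝ) {m s t y : ℝ} (hs : 0 ≤ s)
    (hy : y ≤ m - s * t) : μ (Ici (-t)) ≤ μ.map (fun x => m + s * x) (Ici y) := by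
  rw [Measure.map_apply (by fun_prop) measurableSet_Ici]
  refine measure_mono fun x (hx : -t ≤ x) => ?_
  show y ≤ m + s * x
  nlinarith

theorem robust_reformulation_sound_symmetric_general (μ : Measure ℝ) [IsProbabilityMeasure μ]
    (hL2 : MemLp id 2 μ)
    (hsq : ∫ x, x ^ 2 ∂μ = 1)
    (hsymm : μ.map (fun x : ℝ => -x) = μ)
    (m s γ : ℝ) (hs : 0 ≤ s) (hγ : γ ∈ Set.Ioc (0 : ℝ) (1 / 2))
    (ν : Measure ℝ) (hν : ν = μ.map (fun x => m + s * x))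
    (y : ℝ) (hy : y ≤ m - s * Real.sqrt (1 / (2 * γ))) :
    ENNReal.ofReal (1 - γ) ≤ ν {z : ℝ | y ≤ z} := by
  obtain ⟨hγ0, -⟩ := hγ
  set t := Real.sqrt (1 / (2 * γ))
  have ht : 0 < t := Real.sqrt_pos.mpr (by positivity)
  have hlower_tail : μ (Iio (-t)) ≤ ENNReal.ofReal γ :=
    calc μ (Iio (-t)) ≤ μ (Iic (-t)) := measure_mono Iio_subset_Iic_self
      _ ≤ ENNReal.ofReal ((∫ x, x ^ 2 ∂μ) / (2 * t ^ 2)) :=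
        measure_Iic_neg_le_integral_sq_div_of_map_neg_eq hsymm hL2.integrable_sq ht
      _ = ENNReal.ofReal γ := by
        rw [hsq, Real.sq_sqrt (by positivity)]
        field_simp
  calc ENNReal.ofReal (1 - γ) ≤ μ (Iio (-t))ᶜ :=
        ofReal_one_sub_le_measure_compl measurableSet_Iio hγ0.le hlower_tail
    _ = μ (Ici (-t)) := by rw [compl_Iio]
    _ ≤ ν {z : ℝ | y ≤ z} := hν ▸ measure_Ici_neg_le_map_affine_Ici μ hs hy

/-- Soundness of the robust chance-constraint reformulation (symmetric case): if
`ξ ∼ μ` is standardized and symmetric about 0 and `Z = m + s·ξ`, then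
`y ≤ m - s·√(1/(2γ))` implies `P(Z ≥ y) ≥ 1 - γ` for `γ ∈ (0, 1/2]`. -/
theorem robust_reformulation_sound_symmetric (μ : Measure ℝ) [IsProbabilityMeasure μ]
    (hL2 : MemLp id 2 μ)
    (hmean : ∫ x, x ∂μ = 0) (hsq : ∫ x, x ^ 2 ∂μ = 1)
    (hsymm : μ.map (fun x : ℝ => -x) = μ)
    (m s γ : ℝ) (hs : 0 ≤ s) (hγ : γ ∈ Set.Ioc (0 : ℝ) (1 / 2))
    (ν : Measure ℝ) (hν : ν = μ.map (fun x => m + s * x))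
    (y : ℝ) (hy : y ≤ m - s * Real.sqrt (1 / (2 * γ))) :
    ENNReal.ofReal (1 - γ) ≤ ν {z : ℝ | y ≤ z} :=
  robust_reformulation_sound_symmetric_general μ hL2 hsq hsymm m s γ hs hγ ν hν y hy
end

section
/- One-sided Gauss inequality for symmetric unimodal distributions (large deviations): Let μ be a standardized probability measure on ℝ (mean 0, second moment 1) that is symmetric about 0 (pushforward under negation equals μ) and unimodal with mode 0 (its CDF F(t) = μ((−∞, t]) is convex on (−∞, 0] and concave on [0, ∞)). Then for every real k with k ≥ 2/√3, μ({x : x ≥ k}) ≤ 2/(9k²). -/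
/-!
Write `G s = μ (Ioi s)`. Concavity of the CDF on `[0, ∞)` makes `G` convex there, and by the
layer-cake formula and symmetry `∫₀^∞ s G(s) ds = E[(X⁺)²] / 2 = 1/4`. When `G t > 0`, the
supporting line of `G` at `t` must decrease (otherwise the moment diverges) and vanishes at some
`z > t`; the triangle below it has first moment `n z³ / 6 ≤ 1/4`, where `n` is minus its slope,
while `G t = n (z - t)`. Since `27 t² (z - t) ≤ 4 z³`, this gives `G t ≤ 2 / (9 t²)` for every
`t > 0`, and `μ [k, ∞)` is the limit of `μ (t, ∞)` as `t ↑ k`.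
-/

open MeasureTheory Set Topology

namespace ConvexOn

variable {S : Set ℝ} {f : ℝ → ℝ} {x y : ℝ}

theorem add_rightDeriv_mul_sub_le (hf : ConvexOn ℝ S f) (hx : x ∈ interior S) (hy : y ∈ S) :
    f x + derivWithin f (Ioi x) x * (y - x) ≤ f y := by
  rcases lt_trichotomy y x with hyx | rfl | hxy
  · have hslope := (hf.slope_le_leftDeriv_of_mem_interior hy hx hyx).trans
      (hf.leftDeriv_le_rightDeriv_of_mem_interior hx)
    rw [slope_def_field, div_le_iff₀ (sub_pos.mpr hyx)] at hslope
    linarith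
  · simp
  · have hslope := hf.rightDeriv_le_slope_of_mem_interior hx hy hxy
    rw [slope_def_field, le_div_iff₀ (sub_pos.mpr hxy)] at hslope
    linarith

end ConvexOn

theorem integral_mul_sub_self (n z : ℝ) : ∫ s in (0 : ℝ)..z, s * (n * (z - s)) = n * z ^ 3 / 6 := by
  have hF : ∀ s ∈ uIcc 0 z,
      HasDerivAt (fun s => n * z * s ^ 2 / 2 - n * s ^ 3 / 3) (s * (n * (z - s))) s := fun s _ =>
    ((((hasDerivAt_pow 2 s).const_mul (n * z)).div_const 2).sub
      (((hasDerivAt_pow 3 s).const_mul n).div_const 3)).congr_deriv (by push_cast; ring)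
  rw [intervalIntegral.integral_eq_sub_of_hasDerivAt hF
    ((by fun_prop : Continuous _).intervalIntegrable _ _)]
  ring

theorem ofReal_mul_pow_three_div_six_le_lintegral {G : ℝ → ℝ} {n z : ℝ} (hn : 0 ≤ n) (hz : 0 ≤ z)
    (hline : ∀ s ∈ Ioc 0 z, n * (z - s) ≤ G s) :
    ENNReal.ofReal (n * z ^ 3 / 6) ≤ ∫⁻ s in Ioi 0, ENNReal.ofReal (s * G s) := by
  have hnonneg : ∀ s ∈ Ioc 0 z, 0 ≤ s * (n * (z - s)) := fun s hs =>
    mul_nonneg hs.1.le (mul_nonneg hn (sub_nonneg.2 hs.2))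
  calc ENNReal.ofReal (n * z ^ 3 / 6)
      = ∫⁻ s in Ioc 0 z, ENNReal.ofReal (s * (n * (z - s))) := by
        rw [← integral_mul_sub_self, intervalIntegral.integral_of_le hz,
          ofReal_integral_eq_lintegral_ofReal ((by fun_prop : Continuous _).integrableOn_Ioc)
            ((ae_restrict_mem measurableSet_Ioc).mono hnonneg)]
    _ ≤ ∫⁻ s in Ioc 0 z, ENNReal.ofReal (s * G s) :=
        setLIntegral_mono' measurableSet_Ioc fun s hs =>
          ENNReal.ofReal_le_ofReal (mul_le_mul_of_nonneg_left (hline s hs) hs.1.le)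
    _ ≤ ∫⁻ s in Ioi 0, ENNReal.ofReal (s * G s) := lintegral_mono_set Ioc_subset_Ioi_self

theorem lintegral_Ioi_ofReal_mul_eq_top {G : ℝ → ℝ} {a t : ℝ} (ha : 0 < a)
    (hG : ∀ s, t ≤ s → a ≤ G s) : ∫⁻ s in Ioi 0, ENNReal.ofReal (s * G s) = ⊤ := by
  refine top_unique ?_
  calc ⊤ = ∫⁻ _ in Ioi (max t 1), ENNReal.ofReal a := by
        rw [setLIntegral_const, Real.volume_Ioi, ENNReal.mul_top (ENNReal.ofReal_pos.2 ha).ne']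
    _ ≤ ∫⁻ s in Ioi (max t 1), ENNReal.ofReal (s * G s) :=
        setLIntegral_mono' measurableSet_Ioi fun s hs => by
          have hs1 : 1 ≤ s := (le_max_right t 1).trans hs.le
          have hGs := hG s ((le_max_left t 1).trans hs.le)
          exact ENNReal.ofReal_le_ofReal (by nlinarith)
    _ ≤ ∫⁻ s in Ioi 0, ENNReal.ofReal (s * G s) :=
        lintegral_mono_set (Ioi_subset_Ioi (le_max_of_le_right zero_le_one))

theorem ConvexOn.le_div_sq_of_lintegral_mul_le {G : ℝ → ℝ} {c t : ℝ} (hG : ConvexOn ℝ (Ici 0) G)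
    (hc : 0 ≤ c) (hI : ∫⁻ s in Ioi 0, ENNReal.ofReal (s * G s) ≤ ENNReal.ofReal c) (ht : 0 < t) :
    G t ≤ 8 * c / (9 * t ^ 2) := by
  set m := derivWithin G (Ioi t) t
  have hsupp : ∀ s, 0 ≤ s → G t + m * (s - t) ≤ G s := fun s hs =>
    hG.add_rightDeriv_mul_sub_le (by rwa [interior_Ici]) hs
  rcases le_or_gt (G t) 0 with hg | hg
  · exact hg.trans (by positivity)
  have hm : m < 0 := by
    by_contra! hm
    have htop := lintegral_Ioi_ofReal_mul_eq_top (G := G) hg fun s hs => by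
      nlinarith [hsupp s (ht.le.trans hs)]
    exact ENNReal.ofReal_ne_top (top_unique (htop ▸ hI))
  set n := -m
  have hn : 0 < n := neg_pos.2 hm
  set z := t + G t / n
  have hgz : G t = n * (z - t) := by simp only [z, add_sub_cancel_left, mul_div_cancel₀ _ hn.ne']
  have hline : ∀ s ∈ Ioc 0 z, n * (z - s) ≤ G s := fun s hs => by
    nlinarith [hsupp s hs.1.le]
  have hcube : n * z ^ 3 / 6 ≤ c := (ENNReal.ofReal_le_ofReal_iff hc).1
    ((ofReal_mul_pow_three_div_six_le_lintegral hn.le (by positivity) hline).trans hI)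
  -- `4 z³ - 27 t² (z - t) = (2 z - 3 t)² (z + 3 t)`
  have hcubic : 27 * t ^ 2 * (z - t) ≤ 4 * z ^ 3 := by
    nlinarith [mul_nonneg (sq_nonneg (2 * z - 3 * t)) (by positivity : 0 ≤ z + 3 * t)]
  rw [le_div_iff₀ (by positivity), hgz]
  nlinarith [mul_le_mul_of_nonneg_left hcubic hn.le]

theorem ConcaveOn.convexOn_measureReal_Ioi {μ : Measure ℝ} [IsFiniteMeasure μ] {S : Set ℝ}
    (h : ConcaveOn ℝ S fun t => (μ (Iic t)).toReal) : ConvexOn ℝ S fun t => μ.real (Ioi t) := by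
  have htail : (fun t => μ.real (Ioi t)) = fun t => μ.real univ - (μ (Iic t)).toReal :=
    funext fun t => by rw [← compl_Iic, measureReal_compl measurableSet_Iic]; rfl
  rw [htail]
  exact (convexOn_const _ h.1).sub h

theorem lintegral_Ioi_mul_measureReal_Ioi (μ : Measure ℝ) [IsFiniteMeasure μ] :
    ∫⁻ s in Ioi 0, ENNReal.ofReal (s * μ.real (Ioi s)) =
      ∫⁻ x, ENNReal.ofReal (max x 0 ^ 2 / 2) ∂μ := by
  have hlayer := lintegral_comp_eq_lintegral_meas_lt_mul μ (f := fun x => max x 0) (g := id)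
    (ae_of_all _ fun x => le_max_right x 0) (measurable_id.max measurable_const).aemeasurable
    (fun _ _ => intervalIntegral.intervalIntegrable_id)
    ((ae_restrict_mem measurableSet_Ioi).mono fun _ hs => le_of_lt hs)
  simp only [id, integral_id, zero_pow two_ne_zero, sub_zero] at hlayer
  rw [hlayer]
  refine setLIntegral_congr_fun measurableSet_Ioi fun s (hs : 0 < s) => ?_
  have hset : {x : ℝ | s < max x 0} = Ioi s := by
    ext x
    simp only [mem_ofPred_eq, mem_Ioi, lt_max_iff, or_iff_left (not_lt.2 hs.le)]
  rw [hset, ENNReal.ofReal_mul hs.le, ofReal_measureReal, mul_comm]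

theorem lintegral_max_zero_sq_of_map_neg_eq_self {μ : Measure ℝ}
    (hsymm : μ.map (fun x => -x) = μ) (hint : Integrable (fun x => x ^ 2) μ) :
    ∫⁻ x, ENNReal.ofReal (max x 0 ^ 2 / 2) ∂μ = ENNReal.ofReal ((∫ x, x ^ 2 ∂μ) / 4) := by
  set f : ℝ → ℝ := fun x => max x 0 ^ 2
  have hf : Integrable f μ := hint.mono' (by fun_prop) (ae_of_all _ fun x => by
    rcases le_total x 0 with hx | hx <;> simp [f, hx, sq_nonneg])
  have hf_neg : Integrable (fun x => f (-x)) μ := by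
    rw [← hsymm] at hf
    exact hf.comp_measurable measurable_neg
  have hsum : ∫ x, x ^ 2 ∂μ = 2 * ∫ x, f x ∂μ := by
    have hsplit : ∀ x : ℝ, x ^ 2 = f x + f (-x) := fun x => by
      rcases le_total x 0 with hx | hx <;> simp [f, hx]
    have hreflect : ∫ x, f (-x) ∂μ = ∫ x, f x ∂μ := by
      conv_rhs => rw [← hsymm]
      rw [integral_map measurable_neg.aemeasurable (by fun_prop)]
    simp_rw [hsplit]
    rw [integral_add hf hf_neg, hreflect]; ring
  rw [← ofReal_integral_eq_lintegral_ofReal (hf.div_const 2)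
    (ae_of_all _ fun x => by positivity), integral_div, hsum]
  ring_nf

theorem measure_Ici_le_of_eventually_measure_Ioi_le {μ : Measure ℝ} {f : ℝ → ENNReal} {k : ℝ}
    (hf : ContinuousWithinAt f (Iio k) k) (h : ∀ᶠ t in 𝓝[<] k, μ (Ioi t) ≤ f t) :
    μ (Ici k) ≤ f k := by
  refine ge_of_tendsto hf ?_
  filter_upwards [h, self_mem_nhdsWithin] with t ht htk
  exact (measure_mono (Ici_subset_Ioi.2 htk)).trans ht

theorem one_sided_gauss_large_general (μ : Measure ℝ) [IsProbabilityMeasure μ]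
    (hL2 : MemLp id 2 μ)
    (hsq : ∫ x, x ^ 2 ∂μ = 1)
    (hsymm : μ.map (fun x : ℝ => -x) = μ)
    (hconcave : ConcaveOn ℝ (Set.Ici (0 : ℝ)) (fun t : ℝ => (μ (Set.Iic t)).toReal))
    (k : ℝ) (hk : 2 / Real.sqrt 3 ≤ k) :
    μ {x : ℝ | k ≤ x} ≤ ENNReal.ofReal (2 / (9 * k ^ 2)) := by
  have hk0 : 0 < k := (by positivity : 0 < 2 / Real.sqrt 3).trans_le hk
  have hmoment : ∫⁻ s in Ioi 0, ENNReal.ofReal (s * μ.real (Ioi s)) ≤ ENNReal.ofReal (1 / 4) := by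
    rw [lintegral_Ioi_mul_measureReal_Ioi,
      lintegral_max_zero_sq_of_map_neg_eq_self hsymm hL2.integrable_sq, hsq]
  have htail : ∀ t, 0 < t → μ (Ioi t) ≤ ENNReal.ofReal (2 / (9 * t ^ 2)) := fun t ht => by
    rw [← ofReal_measureReal]
    exact ENNReal.ofReal_le_ofReal ((hconcave.convexOn_measureReal_Ioi.le_div_sq_of_lintegral_mul_le
      (by norm_num) hmoment ht).trans_eq (by ring))
  refine measure_Ici_le_of_eventually_measure_Ioi_le
    (f := fun t => ENNReal.ofReal (2 / (9 * t ^ 2))) ?_ ?_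
  · exact (ENNReal.continuous_ofReal.continuousAt.comp
      (continuousAt_const.div (by fun_prop) (by positivity))).continuousWithinAt
  · filter_upwards [Ioo_mem_nhdsLT hk0] with t ht
    exact htail t ht.1

/-- One-sided Gauss inequality for symmetric unimodal standardized distributions
(large deviations): `μ {x | k ≤ x} ≤ 2/(9k²)` for every `k ≥ 2/√3`. -/
theorem one_sided_gauss_large (μ : Measure ℝ) [IsProbabilityMeasure μ]
    (hL2 : MemLp id 2 μ)
    (hmean : ∫ x, x ∂μ = 0) (hsq : ∫ x, x ^ 2 ∂μ = 1)
    (hsymm : μ.map (fun x : ℝ => -x) = μ)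
    (hconvex : ConvexOn ℝ (Set.Iic (0 : ℝ)) (fun t : ℝ => (μ (Set.Iic t)).toReal))
    (hconcave : ConcaveOn ℝ (Set.Ici (0 : ℝ)) (fun t : ℝ => (μ (Set.Iic t)).toReal))
    (k : ℝ) (hk : 2 / Real.sqrt 3 ≤ k) :
    μ {x : ℝ | k ≤ x} ≤ ENNReal.ofReal (2 / (9 * k ^ 2)) :=
  one_sided_gauss_large_general μ hL2 hsq hsymm hconcave k hk
end

section
/- Quantile bound for symmetric unimodal distributions, high-confidence regime: Let μ be a standardized probability measure on ℝ (mean 0, second moment 1) that is symmetric about 0 and unimodal with mode 0, and let γ ∈ (0, 1/6]. Then μ({x : x ≥ √(2/(9γ))}) ≤ γ; in other words, the (1−γ)-quantile of any standardized symmetric unimodal distribution is at most √(2/(9γ)). -/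
/-!
Write `G s = μ (s, ∞)`. By the layer-cake formula and symmetry,
`∫₀^∞ s G(s) ds = E[(X⁺)²] / 2 = 1 / 4`, and unimodality makes `G` convex on `[0, ∞)`.
For `t > 0`, a supporting line of `G` at `t` bounds `G` from below by a triangle
`a (T - s)` on `[0, T]` passing through `(t, G t)`; its moment `a T³ / 6` is at most `1 / 4`,
and maximising `a (T - t)` under this constraint gives `G t ≤ 2 / (9 t²)`. Letting `t` increase
to `√(2 / (9 γ))` turns this into the bound on the closed tail.
-/

open MeasureTheory Set Filter Topology
open scoped ENNReal

theorem ConvexOn.add_rightDeriv_mul_sub_le_s14 {S : Set ℝ} {f : ℝ → ℝ} {x y : ℝ}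
    (hf : ConvexOn ℝ S f) (hx : x ∈ interior S) (hy : y ∈ S) :
    f x + derivWithin f (Ioi x) x * (y - x) ≤ f y := by
  rcases lt_trichotomy y x with hyx | rfl | hxy
  · have h := (hf.slope_le_leftDeriv_of_mem_interior hy hx hyx).trans
      (hf.leftDeriv_le_rightDeriv_of_mem_interior hx)
    rw [slope_def_field, div_le_iff₀ (sub_pos.2 hyx)] at h
    linarith
  · simp
  · have h := hf.rightDeriv_le_slope_of_mem_interior hx hy hxy
    rw [slope_def_field, le_div_iff₀ (sub_pos.2 hxy)] at h
    linarith

theorem lintegral_max_zero_sq_eq_two_mul_lintegral_measure_Ioi (μ : Measure ℝ) :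
    ∫⁻ x, ENNReal.ofReal (max x 0 ^ 2) ∂μ = 2 * ∫⁻ t in Ioi 0, μ (Ioi t) * ENNReal.ofReal t := by
  have h := lintegral_comp_eq_lintegral_meas_lt_mul μ (f := fun x => max x 0) (g := fun t => 2 * t)
    (.of_forall fun x => le_max_right x 0) (by fun_prop)
    (fun t _ => by apply Continuous.intervalIntegrable; fun_prop)
    ((ae_restrict_iff' measurableSet_Ioi).2 (.of_forall fun t (ht : 0 < t) => by positivity))
  have hsq : ∀ x : ℝ, ∫ t in (0 : ℝ)..x, 2 * t = x ^ 2 := fun x => by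
    rw [intervalIntegral.integral_const_mul, integral_id]; ring
  have htail : ∀ t ∈ Ioi (0 : ℝ),
      μ {a | t < max a 0} * ENNReal.ofReal (2 * t) = 2 * (μ (Ioi t) * ENNReal.ofReal t) := by
    intro t (ht : 0 < t)
    have hset : {a : ℝ | t < max a 0} = Ioi t := by ext a; simp [ht.not_gt]
    rw [hset, ENNReal.ofReal_mul zero_le_two, ENNReal.ofReal_ofNat]
    ring
  simp only [hsq] at h
  rw [h, setLIntegral_congr_fun measurableSet_Ioi htail,
    lintegral_const_mul' _ _ ENNReal.ofNat_ne_top]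

theorem two_mul_lintegral_max_zero_sq_of_map_neg_eq_self {μ : Measure ℝ}
    (hsymm : μ.map (fun x : ℝ => -x) = μ) :
    2 * ∫⁻ x, ENNReal.ofReal (max x 0 ^ 2) ∂μ = ∫⁻ x, ENNReal.ofReal (x ^ 2) ∂μ := by
  have hsplit : ∀ x : ℝ,
      ENNReal.ofReal (max x 0 ^ 2) + ENNReal.ofReal (max (-x) 0 ^ 2) = ENNReal.ofReal (x ^ 2) := by
    intro x
    rcases le_total x 0 with hx | hx
    · simp [max_eq_right hx, max_eq_left (neg_nonneg.2 hx)]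
    · simp [max_eq_left hx, max_eq_right (neg_nonpos.2 hx)]
  have hneg : ∫⁻ x, ENNReal.ofReal (max (-x) 0 ^ 2) ∂μ =
      ∫⁻ x, ENNReal.ofReal (max x 0 ^ 2) ∂μ := by
    conv_rhs => rw [← hsymm]
    rw [lintegral_map (by fun_prop) measurable_neg]
  rw [← lintegral_congr hsplit, lintegral_add_left (by fun_prop), hneg, two_mul]

theorem ofReal_le_lintegral_measure_Ioi_mul {μ : Measure ℝ} {a T : ℝ} (ha : 0 ≤ a) (hT : 0 ≤ T)
    (h : ∀ s ∈ Icc 0 T, a * (T - s) ≤ μ.real (Ioi s)) :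
    ENNReal.ofReal (a * T ^ 3 / 6) ≤ ∫⁻ s in Ioi 0, μ (Ioi s) * ENNReal.ofReal s := by
  have hint : ∫ s in (0 : ℝ)..T, s * (a * (T - s)) = a * T ^ 3 / 6 := by
    have : (fun s : ℝ => s * (a * (T - s))) = fun s => a * T * s - a * s ^ 2 := by ext s; ring
    rw [this, intervalIntegral.integral_sub (by apply Continuous.intervalIntegrable; fun_prop)
        (by apply Continuous.intervalIntegrable; fun_prop),
      intervalIntegral.integral_const_mul, intervalIntegral.integral_const_mul, integral_id,
      integral_pow]
    ring
  have hnonneg : ∀ s ∈ Ioc 0 T, 0 ≤ s * (a * (T - s)) := fun s hs =>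
    mul_nonneg hs.1.le (mul_nonneg ha (sub_nonneg.2 hs.2))
  calc ENNReal.ofReal (a * T ^ 3 / 6)
      = ∫⁻ s in Ioc 0 T, ENNReal.ofReal (s * (a * (T - s))) := by
        rw [← hint, intervalIntegral.integral_of_le hT,
          ofReal_integral_eq_lintegral_ofReal (Continuous.integrableOn_Ioc (by fun_prop))
            ((ae_restrict_iff' measurableSet_Ioc).2 (.of_forall hnonneg))]
    _ ≤ ∫⁻ s in Ioc 0 T, μ (Ioi s) * ENNReal.ofReal s := by
        refine setLIntegral_mono' measurableSet_Ioc fun s hs => ?_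
        rw [ENNReal.ofReal_mul hs.1.le, mul_comm]
        exact mul_le_mul_left (ENNReal.ofReal_le_of_le_toReal (h s (Ioc_subset_Icc_self hs))) _
    _ ≤ ∫⁻ s in Ioi 0, μ (Ioi s) * ENNReal.ofReal s := lintegral_mono_set Ioc_subset_Ioi_self

theorem convexOn_measureReal_Ioi_of_concaveOn {μ : Measure ℝ} [IsProbabilityMeasure μ]
    {S : Set ℝ} (hS : Convex ℝ S) (h : ConcaveOn ℝ S fun t => (μ (Iic t)).toReal) :
    ConvexOn ℝ S fun t => μ.real (Ioi t) := by
  have hG : (fun t => μ.real (Ioi t)) = fun t => 1 - (μ (Iic t)).toReal := by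
    ext t
    rw [← compl_Iic, probReal_compl_eq_one_sub measurableSet_Iic]
    rfl
  rw [hG]
  exact (convexOn_const 1 hS).sub h

theorem measureReal_Ioi_le_of_convexOn {μ : Measure ℝ} [IsFiniteMeasure μ]
    (hG : ConvexOn ℝ (Ici 0) fun s => μ.real (Ioi s))
    (hI : 4 * ∫⁻ s in Ioi 0, μ (Ioi s) * ENNReal.ofReal s ≤ 1) {t : ℝ}
    (ht : 0 < t) : μ.real (Ioi t) ≤ 2 / (9 * t ^ 2) := by
  have htriangle : ∀ a T : ℝ, 0 ≤ a → 0 ≤ T → (∀ s ∈ Icc 0 T, a * (T - s) ≤ μ.real (Ioi s)) →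
      a * T ^ 3 ≤ 3 / 2 := fun a T ha hT h => by
    have := (mul_le_mul_right (ofReal_le_lintegral_measure_Ioi_mul ha hT h) 4).trans hI
    rw [← ENNReal.ofReal_ofNat 4, ← ENNReal.ofReal_mul (by norm_num), ← ENNReal.ofReal_one,
      ENNReal.ofReal_le_ofReal_iff zero_le_one] at this
    linarith
  set p := μ.real (Ioi t)
  set m := derivWithin (fun s => μ.real (Ioi s)) (Ioi t) t
  have ht' : t ∈ interior (Ici 0) := by rwa [interior_Ici]
  have hline : ∀ s, 0 ≤ s → p + m * (s - t) ≤ μ.real (Ioi s) := fun s hs =>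
    hG.add_rightDeriv_mul_sub_le_s14 ht' hs
  have hp : 0 ≤ p := measureReal_nonneg
  have hm : m ≤ 0 := by
    have hslope := hG.rightDeriv_le_slope_of_mem_interior ht' (y := t + 1) (by simp; linarith)
      (by linarith)
    have hanti : μ.real (Ioi (t + 1)) ≤ p := measureReal_mono (Ioi_subset_Ioi (by linarith))
    rw [slope_def_field] at hslope
    norm_num at hslope
    linarith
  rw [le_div_iff₀ (by positivity)]
  rcases hm.lt_or_eq with hm | hm
  · have ha : 0 < -m := neg_pos.2 hm
    set T := t + p / -m
    have hpT : p = -m * (T - t) := by rw [add_sub_cancel_left, mul_div_cancel₀ _ ha.ne']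
    have hT := htriangle (-m) T ha.le (add_nonneg ht.le (div_nonneg hp ha.le)) fun s hs => by
      nlinarith [hline s hs.1]
    -- `4 T³ - 27 t² (T - t) = (2 T - 3 t)² (T + 3 t)`
    nlinarith [mul_nonneg ha.le
      (mul_nonneg (sq_nonneg (2 * T - 3 * t)) (by positivity : 0 ≤ T + 3 * t))]
  · -- a horizontal supporting line still dominates the triangle with `T = 3 t`
    have hT := htriangle (p / (3 * t)) (3 * t) (div_nonneg hp (by positivity)) (by positivity)
      fun s hs => by
        have h := hline s hs.1
        rw [hm, zero_mul, add_zero] at h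
        rw [div_mul_eq_mul_div, div_le_iff₀ (by positivity)]
        nlinarith [hs.1]
    field_simp at hT
    nlinarith

theorem measureReal_Ici_le_of_eventually_measureReal_Ioi_le {μ : Measure ℝ} [IsFiniteMeasure μ]
    {f : ℝ → ℝ} {t : ℝ} (hf : ContinuousWithinAt f (Iio t) t)
    (h : ∀ᶠ s in 𝓝[<] t, μ.real (Ioi s) ≤ f s) : μ.real (Ici t) ≤ f t :=
  ge_of_tendsto hf <| h.mp <| eventually_nhdsWithin_of_forall fun _ hs h' =>
    (measureReal_mono (Ici_subset_Ioi.2 hs)).trans h'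

theorem symmetric_unimodal_quantile_bound_high_general (μ : Measure ℝ) [IsProbabilityMeasure μ]
    (hL2 : MemLp id 2 μ)
    (hsq : ∫ x, x ^ 2 ∂μ = 1)
    (hsymm : μ.map (fun x : ℝ => -x) = μ)
    (hconcave : ConcaveOn ℝ (Set.Ici (0 : ℝ)) (fun t : ℝ => (μ (Set.Iic t)).toReal))
    (γ : ℝ) (hγ : γ ∈ Set.Ioc (0 : ℝ) (1 / 6)) :
    μ {x : ℝ | Real.sqrt (2 / (9 * γ)) ≤ x} ≤ ENNReal.ofReal γ := by
  have hmoment : ∫⁻ x, ENNReal.ofReal (x ^ 2) ∂μ = 1 := by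
    rw [← ofReal_integral_eq_lintegral_ofReal (by simpa using hL2.integrable_sq)
      (.of_forall fun x => sq_nonneg x), hsq, ENNReal.ofReal_one]
  have hI : 4 * ∫⁻ t in Ioi 0, μ (Ioi t) * ENNReal.ofReal t = 1 := by
    rw [← hmoment, ← two_mul_lintegral_max_zero_sq_of_map_neg_eq_self hsymm,
      lintegral_max_zero_sq_eq_two_mul_lintegral_measure_Ioi]
    ring
  have htail : ∀ t, 0 < t → μ.real (Ioi t) ≤ 2 / (9 * t ^ 2) := fun t =>
    measureReal_Ioi_le_of_convexOn (convexOn_measureReal_Ioi_of_concaveOn (convex_Ici 0) hconcave)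
      hI.le
  set x₀ := √(2 / (9 * γ))
  have hγ₀ : 0 < γ := hγ.1
  have hx₀ : 0 < x₀ := Real.sqrt_pos.2 (by positivity)
  have hγx₀ : 2 / (9 * x₀ ^ 2) = γ := by
    rw [Real.sq_sqrt (by positivity)]
    field_simp
  have hIci : μ.real (Ici x₀) ≤ 2 / (9 * x₀ ^ 2) :=
    measureReal_Ici_le_of_eventually_measureReal_Ioi_le (f := fun s => 2 / (9 * s ^ 2))
      (by fun_prop (disch := positivity))
      (eventually_of_mem (Ioo_mem_nhdsLT hx₀) fun s hs => htail s hs.1)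
  rw [← ofReal_measureReal]
  exact ENNReal.ofReal_le_ofReal (hγx₀ ▸ hIci)

/-- Quantile bound for symmetric unimodal standardized distributions, high-confidence
regime: `μ {x | √(2/(9γ)) ≤ x} ≤ γ` for `γ ∈ (0, 1/6]`. -/
theorem symmetric_unimodal_quantile_bound_high (μ : Measure ℝ) [IsProbabilityMeasure μ]
    (hL2 : MemLp id 2 μ)
    (hmean : ∫ x, x ∂μ = 0) (hsq : ∫ x, x ^ 2 ∂μ = 1)
    (hsymm : μ.map (fun x : ℝ => -x) = μ)
    (hconvex : ConvexOn ℝ (Set.Iic (0 : ℝ)) (fun t : ℝ => (μ (Set.Iic t)).toReal))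
    (hconcave : ConcaveOn ℝ (Set.Ici (0 : ℝ)) (fun t : ℝ => (μ (Set.Iic t)).toReal))
    (γ : ℝ) (hγ : γ ∈ Set.Ioc (0 : ℝ) (1 / 6)) :
    μ {x : ℝ | Real.sqrt (2 / (9 * γ)) ≤ x} ≤ ENNReal.ofReal γ :=
  symmetric_unimodal_quantile_bound_high_general μ hL2 hsq hsymm hconcave γ hγ
end
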